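/- Let A and B be nontrivial finite groups which are not both of order 2. Then the free product A ∗ B contains a finite-index subgroup which is isomorphic to a free group of rank n for some n ≥ 2 (in particular, A ∗ B is virtually a nonabelian free group). -/

import Mathlib

/-!
The kernel `K` of the natural map `G ∗ H →* G × H` has finite index when `G` and `H` are finite.
It is the subgroup generated by the commutators `⁅x, y⁆` with `x ∈ G`, `y ∈ H`, because that
subgroup is normal and the quotient by it is generated by two commuting copies of `G` and `H`.
The commutators with `x ≠ 1` and `y ≠ 1` are a free basis of `K` by ping-pong on reduced words:
`⁅x, y⁆ = x y x⁻¹ y⁻¹` turns every reduced word not beginning with `y x` into one beginning with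
`x y`. So `K` is free of rank `(|G| - 1) (|H| - 1)`, which is at least `2` unless `|G| = |H| = 2`.
-/

open scoped commutatorElement Pointwise

universe u v

namespace Monoid.CoprodI.Word

variable {ι : Type*} [DecidableEq ι] {i j : ι}

section Monoid

variable {M : ι → Type*} [∀ i, Monoid (M i)] [∀ i, DecidableEq (M i)]

theorem toList_of_smul_of_fstIdx_ne {m : M i} (hm : m ≠ 1) {w : Word M}
    (hw : w.fstIdx ≠ some i) : (of m • w).toList = ⟨i, m⟩ :: w.toList := by
  rw [← cons_eq_smul (h1 := hw) (h2 := hm)]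
  rfl

theorem fstIdx_of_smul_of_fstIdx_ne {m : M i} (hm : m ≠ 1) {w : Word M}
    (hw : w.fstIdx ≠ some i) : (of m • w).fstIdx = some i := by
  simp [fstIdx, toList_of_smul_of_fstIdx_ne hm hw]

end Monoid

variable {G : ι → Type*} [∀ i, Group (G i)] [∀ i, DecidableEq (G i)]

theorem toList_of_inv_smul {m : G i} {w : Word G} {t : List (Σ i, G i)}
    (h : w.toList = ⟨i, m⟩ :: t) : (of m⁻¹ • w).toList = t := by
  induction w using consRecOn with
  | empty => simp [empty] at h
  | cons j m' w hw hm' _ =>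
    obtain ⟨⟨rfl, hmm⟩, rfl⟩ : (j = i ∧ m' ≍ m) ∧ w.toList = t := by simpa [cons] using h
    obtain rfl := eq_of_heq hmm
    rw [cons_eq_smul, map_inv, inv_smul_smul]

theorem fstIdx_of_inv_smul {m : G i} (hm : m ≠ 1) {w : Word G}
    (h : w.toList.head? ≠ some ⟨i, m⟩) : (of m⁻¹ • w).fstIdx = some i := by
  induction w using consRecOn with
  | empty => exact fstIdx_of_smul_of_fstIdx_ne (inv_ne_one.2 hm) (by simp [fstIdx, empty])
  | cons j m' w hw hm' _ =>
    rcases eq_or_ne j i with rfl | hji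
    · have : m' ≠ m := by rintro rfl; simp [cons] at h
      rw [cons_eq_smul, smul_smul, ← map_mul]
      exact fstIdx_of_smul_of_fstIdx_ne (by rwa [Ne, inv_mul_eq_one, eq_comm]) hw
    · exact fstIdx_of_smul_of_fstIdx_ne (inv_ne_one.2 hm) (by simpa using hji)

theorem prefix_toList_commutatorElement_smul (hij : i ≠ j) {x : G i} {y : G j} (hx : x ≠ 1)
    (hy : y ≠ 1) {w : Word G} (hw : ¬[⟨j, y⟩, ⟨i, x⟩] <+: w.toList) :
    [⟨i, x⟩, ⟨j, y⟩] <+: (⁅of x, of y⁆ • w).toList := by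
  set w₁ := of y⁻¹ • w
  have h₁ : w₁.toList.head? ≠ some ⟨i, x⟩ := by
    by_cases hw₀ : w.toList.head? = some ⟨j, y⟩
    · obtain ⟨t, ht⟩ := List.head?_eq_some_iff.1 hw₀
      rw [toList_of_inv_smul ht]
      rintro h
      obtain ⟨t', rfl⟩ := List.head?_eq_some_iff.1 h
      exact hw ⟨t', by simp [ht]⟩
    · obtain ⟨l, hl, hlj⟩ := Option.map_eq_some_iff.1 (fstIdx_of_inv_smul hy hw₀)
      rintro h
      rw [h, Option.some_inj] at hl
      exact hij (by rw [← hlj, ← hl])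
  have h₂ : (of x⁻¹ • w₁).fstIdx = some i := fstIdx_of_inv_smul hx h₁
  have h₃ := toList_of_smul_of_fstIdx_ne hy (w := of x⁻¹ • w₁) (by rw [h₂]; simpa using hij)
  have h₄ := toList_of_smul_of_fstIdx_ne hx (w := of y • of x⁻¹ • w₁)
    (by rw [fstIdx, h₃]; simpa using hij.symm)
  rw [commutatorElement_def, mul_smul, mul_smul, mul_smul, ← map_inv, ← map_inv, h₄, h₃]
  exact ⟨_, rfl⟩

end Monoid.CoprodI.Word

namespace Monoid.Coprod

open Subgroup

variable {G : Type u} {H : Type v} [Group G] [Group H]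

theorem normal_commutator_range_inl_range_inr :
    ⁅(inl : G →* G ∗ H).range, (inr : H →* G ∗ H).range⁆.Normal := by
  rw [← normalizer_eq_top_iff, eq_top_iff, ← closure_range_inl_union_inr, closure_le,
    Set.union_subset_iff, ← MonoidHom.coe_range, ← MonoidHom.coe_range, Subgroup.commutator_def]
  constructor
  · refine le_normalizer_closure_iff.2 ?_
    rintro _ ⟨a, rfl⟩ _ ⟨_, ⟨x, rfl⟩, _, ⟨y, rfl⟩, rfl⟩
    have : (inl a : G ∗ H) * ⁅(inl x : G ∗ H), inr y⁆ * (inl a)⁻¹ =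
        ⁅(inl (a * x) : G ∗ H), inr y⁆ * ⁅(inl a : G ∗ H), inr y⁆⁻¹ := by
      simp only [commutatorElement_def, map_mul]; group
    rw [this]
    exact mul_mem (subset_closure ⟨_, ⟨_, rfl⟩, _, ⟨_, rfl⟩, rfl⟩)
      (inv_mem (subset_closure ⟨_, ⟨_, rfl⟩, _, ⟨_, rfl⟩, rfl⟩))
  · refine le_normalizer_closure_iff.2 ?_
    rintro _ ⟨b, rfl⟩ _ ⟨_, ⟨x, rfl⟩, _, ⟨y, rfl⟩, rfl⟩
    have : (inr b : G ∗ H) * ⁅(inl x : G ∗ H), inr y⁆ * (inr b)⁻¹ =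
        ⁅(inl x : G ∗ H), inr b⁆⁻¹ * ⁅(inl x : G ∗ H), inr (b * y)⁆ := by
      simp only [commutatorElement_def, map_mul]; group
    rw [this]
    exact mul_mem (inv_mem (subset_closure ⟨_, ⟨_, rfl⟩, _, ⟨_, rfl⟩, rfl⟩))
      (subset_closure ⟨_, ⟨_, rfl⟩, _, ⟨_, rfl⟩, rfl⟩)

theorem ker_toProd :
    (toProd : G ∗ H →* G × H).ker = ⁅(inl : G →* G ∗ H).range, (inr : H →* G ∗ H).range⁆ := by
  have := normal_commutator_range_inl_range_inr (G := G) (H := H)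
  refine le_antisymm ?_ ?_
  · let π := QuotientGroup.mk' ⁅(inl : G →* G ∗ H).range, (inr : H →* G ∗ H).range⁆
    have hcomm : ∀ x y, Commute ((π.comp inl) x) ((π.comp inr) y) := fun x y => by
      rw [← commutatorElement_eq_one_iff_commute, MonoidHom.comp_apply, MonoidHom.comp_apply,
        ← map_commutatorElement, QuotientGroup.mk'_apply, QuotientGroup.eq_one_iff]
      exact commutator_mem_commutator ⟨x, rfl⟩ ⟨y, rfl⟩
    have hπ : (MonoidHom.noncommCoprod _ _ hcomm).comp toProd = π := by
      ext <;> simp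
    intro g hg
    suffices π g = 1 from (QuotientGroup.eq_one_iff g).1 this
    rw [← hπ, MonoidHom.comp_apply, MonoidHom.mem_ker.1 hg, map_one]
  · rw [commutator_le]
    rintro _ ⟨x, rfl⟩ _ ⟨y, rfl⟩
    simp [MonoidHom.mem_ker, commutatorElement_def]

/-- Reduced words are only available for `CoprodI`, so `G ∗ H` is made to act on the words of
the `Bool`-indexed family `G, H`, lifted to a common universe. -/
abbrev boolFamily (G : Type u) (H : Type v) : Bool → Type (max u v) :=
  fun b => cond b (ULift.{v} G) (ULift.{u} H)

instance : ∀ b, Group (boolFamily G H b)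
  | true => inferInstanceAs (Group (ULift G))
  | false => inferInstanceAs (Group (ULift H))

def toCoprodI : G ∗ H →* CoprodI (boolFamily G H) :=
  lift ((CoprodI.of (i := true)).comp (MulEquiv.ulift.symm : G ≃* ULift G).toMonoidHom)
    ((CoprodI.of (i := false)).comp (MulEquiv.ulift.symm : H ≃* ULift H).toMonoidHom)

variable (G H) in
def liftCommutators : FreeGroup ({x : G // x ≠ 1} × {y : H // y ≠ 1}) →* G ∗ H :=
  FreeGroup.lift fun p => ⁅(inl p.1.1 : G ∗ H), inr p.2.1⁆

theorem injective_liftCommutators [Nontrivial ({x : G // x ≠ 1} × {y : H // y ≠ 1})] :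
    Function.Injective (liftCommutators G H) := by
  classical
  let : MulAction (G ∗ H) (CoprodI.Word (boolFamily G H)) := MulAction.compHom _ toCoprodI
  let X : {x : G // x ≠ 1} × {y : H // y ≠ 1} → Set (CoprodI.Word (boolFamily G H)) :=
    fun p => {w | [⟨true, ULift.up p.1.1⟩, ⟨false, ULift.up p.2.1⟩] <+: w.toList}
  let Y : {x : G // x ≠ 1} × {y : H // y ≠ 1} → Set (CoprodI.Word (boolFamily G H)) :=
    fun p => {w | [⟨false, ULift.up p.2.1⟩, ⟨true, ULift.up p.1.1⟩] <+: w.toList}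
  have hX : ∀ p, ⁅(inl p.1.1 : G ∗ H), (inr p.2.1 : G ∗ H)⁆ • (Y p)ᶜ ⊆ X p := by
    rintro ⟨⟨x, hx⟩, ⟨y, hy⟩⟩ _ ⟨w, hw, rfl⟩
    exact CoprodI.Word.prefix_toList_commutatorElement_smul Bool.true_eq_false.mp
      (fun h => hx (congrArg ULift.down h)) (fun h => hy (congrArg ULift.down h)) hw
  have hY : ∀ p, ⁅(inl p.1.1 : G ∗ H), (inr p.2.1 : G ∗ H)⁆⁻¹ • (X p)ᶜ ⊆ Y p := by
    rintro ⟨⟨x, hx⟩, ⟨y, hy⟩⟩ _ ⟨w, hw, rfl⟩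
    rw [commutatorElement_inv]
    exact CoprodI.Word.prefix_toList_commutatorElement_smul Bool.false_eq_true.mp
      (fun h => hy (congrArg ULift.down h)) (fun h => hx (congrArg ULift.down h)) hw
  have prefix_eq {l₁ l₂ : List (Σ b, boolFamily G H b)} {w : CoprodI.Word (boolFamily G H)}
      (h₁ : l₁ <+: w.toList) (h₂ : l₂ <+: w.toList) (hl : l₁.length = l₂.length) : l₁ = l₂ :=
    (List.prefix_of_prefix_length_le h₁ h₂ hl.le).eq_of_length hl
  refine FreeGroup.injective_lift_of_ping_pong _ X Y
    (fun p => ⟨_, hX p ⟨.empty, by simp [Y], rfl⟩⟩) ?_ ?_ ?_ hX hY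
  · refine fun p q hpq => Set.disjoint_left.2 fun w hp hq => hpq ?_
    obtain ⟨h₁, h₂⟩ : p.1.1 = q.1.1 ∧ p.2.1 = q.2.1 := by simpa using prefix_eq hp hq rfl
    exact Prod.ext (Subtype.ext h₁) (Subtype.ext h₂)
  · refine fun p q hpq => Set.disjoint_left.2 fun w hp hq => hpq ?_
    obtain ⟨h₂, h₁⟩ : p.2.1 = q.2.1 ∧ p.1.1 = q.1.1 := by simpa using prefix_eq hp hq rfl
    exact Prod.ext (Subtype.ext h₁) (Subtype.ext h₂)
  · refine fun p q => Set.disjoint_left.2 fun w hp hq => ?_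
    simpa using prefix_eq hp hq rfl

theorem range_liftCommutators :
    (liftCommutators G H).range = ⁅(inl : G →* G ∗ H).range, (inr : H →* G ∗ H).range⁆ := by
  rw [liftCommutators, FreeGroup.range_lift_eq_closure]
  refine le_antisymm ((closure_le _).2 ?_) (commutator_le.2 ?_)
  · rintro _ ⟨p, rfl⟩
    exact commutator_mem_commutator ⟨_, rfl⟩ ⟨_, rfl⟩
  · rintro _ ⟨x, rfl⟩ _ ⟨y, rfl⟩
    rcases eq_or_ne x 1 with rfl | hx
    · simp
    rcases eq_or_ne y 1 with rfl | hy
    · simp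
    exact subset_closure ⟨(⟨x, hx⟩, ⟨y, hy⟩), rfl⟩

end Monoid.Coprod

theorem two_le_card_prod_subtype_ne {α β : Type*} [Finite α] [Finite β] [Nontrivial α]
    [Nontrivial β] (a : α) (b : β) (h : ¬(Nat.card α = 2 ∧ Nat.card β = 2)) :
    2 ≤ Nat.card ({x // x ≠ a} × {y // y ≠ b}) := by
  classical
  have hα : Nat.card {x // x ≠ a} + 1 = Nat.card α := by
    rw [← Finite.card_option]; exact Nat.card_congr (Equiv.optionSubtypeNe a)
  have hβ : Nat.card {y // y ≠ b} + 1 = Nat.card β := by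
    rw [← Finite.card_option]; exact Nat.card_congr (Equiv.optionSubtypeNe b)
  have hα₁ := Finite.one_lt_card (α := α)
  have hβ₁ := Finite.one_lt_card (α := β)
  have hsum : 3 ≤ Nat.card {x // x ≠ a} + Nat.card {y // y ≠ b} := by omega
  rw [Nat.card_prod]
  nlinarith

/-- The free product of two nontrivial finite groups, not both of order 2, is virtually a
nonabelian free group of finite rank. -/
theorem freeProduct_virtually_free {A B : Type*} [Group A] [Group B]
    [Finite A] [Finite B] [Nontrivial A] [Nontrivial B]
    (h : ¬(Nat.card A = 2 ∧ Nat.card B = 2)) :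
    ∃ H : Subgroup (Monoid.Coprod A B), H.FiniteIndex ∧
      ∃ n : ℕ, 2 ≤ n ∧ Nonempty (H ≃* FreeGroup (Fin n)) := by
  have hrank := two_le_card_prod_subtype_ne (1 : A) (1 : B) h
  have : Nontrivial ({x : A // x ≠ 1} × {y : B // y ≠ 1}) :=
    Finite.one_lt_card_iff_nontrivial.1 hrank
  refine ⟨Monoid.Coprod.toProd.ker, inferInstance, _, hrank, ⟨?_⟩⟩
  exact (MulEquiv.subgroupCongr (Monoid.Coprod.range_liftCommutators.trans
      Monoid.Coprod.ker_toProd.symm).symm).trans <|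
    (MonoidHom.ofInjective Monoid.Coprod.injective_liftCommutators).symm.trans <|
    FreeGroup.freeGroupCongr (Finite.equivFin _)
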